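/- arXiv:2202.02797 — 4 statements merged into one kernel-verified Lean document; each statement's English description precedes it below -/
import Mathlib

section
/- Let n ≥ 1, let σ : Fin n ≃ Fin n be a permutation, let Lˢ and Lᵗ be n×n real matrices, let t be a real number, and let K ≥ 1 be a natural number. For z ∈ {s,t} define the truncated heat diffusion wavelet Ψᶻ = ∑_{k=1}^{K} ((−t)^k / k!) (Lᶻ)^k, and for a real constant Ψ̄ define Bᶻ by Bᶻ_{ij} = Ψ̄ − Ψᶻ_{ij} if i ≠ j and Bᶻ_{ii} = 0. For each k ∈ {1,…,K} define the perturbation Δ⁽ᵏ⁾_{ij} = ((Lˢ)^k)_{ij} − ((Lᵗ)^k)_{σ(i)σ(j)}. Fix a node i and nonnegative reals ε₁,…,ε_K, and assume that for every k ∈ {1,…,K}: ∑_{j=1}^{n} (Δ⁽ᵏ⁾_{ij})² ≤ ε_k. Then the topology violation of the matched pair (i, σ(i)) satisfies ∑_{j=1}^{n} (Bˢ_{ij} − Bᵗ_{σ(i)σ(j)})² ≤ K · ∑_{k=1}^{K} (t^k / k!)² · ε_k. -/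
/-!
Off the diagonal, `Bˢ_{ij} - Bᵗ_{σ(i)σ(j)}` is `-∑ₖ cₖ Δ⁽ᵏ⁾_{ij}` with `cₖ = (-t)^k / k!`, and on the
diagonal it vanishes. Cauchy–Schwarz over the `K` orders bounds its square by
`K ∑ₖ cₖ² (Δ⁽ᵏ⁾_{ij})²`; summing over `j` and using `cₖ² = (t^k / k!)²` gives the bound.
-/

open Finset

lemma sq_ite_sub_ite_le {ι κ : Type*} [DecidableEq ι] [DecidableEq κ] {σ : ι → κ}
    (hσ : Function.Injective σ) (c : ℝ) (P : Matrix ι ι ℝ) (Q : Matrix κ κ ℝ) (i j : ι) :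
    ((if i = j then 0 else c - P i j) - (if σ i = σ j then 0 else c - Q (σ i) (σ j))) ^ 2 ≤
      (P i j - Q (σ i) (σ j)) ^ 2 := by
  by_cases h : i = j
  · subst h
    simpa using sq_nonneg _
  · rw [if_neg h, if_neg (hσ.ne h)]
    exact le_of_eq (by ring)

lemma sum_smul_apply_sub_sum_smul_apply {κ ι ι' : Type*} (s : Finset κ) (c : κ → ℝ)
    (A : κ → Matrix ι ι ℝ) (B : κ → Matrix ι' ι' ℝ) (i j : ι) (i' j' : ι') :
    (∑ k ∈ s, c k • A k) i j - (∑ k ∈ s, c k • B k) i' j' =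
      ∑ k ∈ s, c k * (A k i j - B k i' j') := by
  simp only [Matrix.sum_apply, Matrix.smul_apply, smul_eq_mul, mul_sub, sum_sub_distrib]

lemma sum_sq_sum_mul_le {ι κ : Type*} (s : Finset κ) (u : Finset ι) (c : κ → ℝ)
    (d : κ → ι → ℝ) :
    ∑ j ∈ u, (∑ k ∈ s, c k * d k j) ^ 2 ≤ #s * ∑ k ∈ s, c k ^ 2 * ∑ j ∈ u, d k j ^ 2 := by
  calc ∑ j ∈ u, (∑ k ∈ s, c k * d k j) ^ 2
      ≤ ∑ j ∈ u, #s * ∑ k ∈ s, (c k * d k j) ^ 2 :=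
        sum_le_sum fun j _ => sq_sum_le_card_mul_sum_sq
    _ = #s * ∑ k ∈ s, c k ^ 2 * ∑ j ∈ u, d k j ^ 2 := by
        rw [← mul_sum, sum_comm]
        simp only [mul_pow, mul_sum]

lemma sq_neg_pow_div (t : ℝ) (k : ℕ) (a : ℝ) : ((-t) ^ k / a) ^ 2 = (t ^ k / a) ^ 2 := by
  rw [div_pow, div_pow, pow_right_comm, neg_sq, pow_right_comm]

theorem sigma_theorem1_per_node_general
    (n K : ℕ)
    (σ : Equiv.Perm (Fin n)) (Ls Lt : Matrix (Fin n) (Fin n) ℝ) (t Ψbar : ℝ)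
    (Ψs Ψt : Matrix (Fin n) (Fin n) ℝ)
    (hΨs : Ψs = ∑ k ∈ Finset.Icc 1 K, ((-t) ^ k / (Nat.factorial k : ℝ)) • Ls ^ k)
    (hΨt : Ψt = ∑ k ∈ Finset.Icc 1 K, ((-t) ^ k / (Nat.factorial k : ℝ)) • Lt ^ k)
    (Bs Bt : Matrix (Fin n) (Fin n) ℝ)
    (hBs : ∀ i j : Fin n, Bs i j = if i = j then 0 else Ψbar - Ψs i j)
    (hBt : ∀ i j : Fin n, Bt i j = if i = j then 0 else Ψbar - Ψt i j)
    (Δ : ℕ → Matrix (Fin n) (Fin n) ℝ)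
    (hΔ : ∀ (k : ℕ) (i j : Fin n), Δ k i j = (Ls ^ k) i j - (Lt ^ k) (σ i) (σ j))
    (i : Fin n) (ε : ℕ → ℝ)
    (hbound : ∀ k ∈ Finset.Icc 1 K, ∑ j : Fin n, (Δ k i j) ^ 2 ≤ ε k) :
    ∑ j : Fin n, (Bs i j - Bt (σ i) (σ j)) ^ 2 ≤
      (K : ℝ) * ∑ k ∈ Finset.Icc 1 K, (t ^ k / (Nat.factorial k : ℝ)) ^ 2 * ε k := by
  have hentry : ∀ j, (Bs i j - Bt (σ i) (σ j)) ^ 2 ≤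
      (∑ k ∈ Icc 1 K, ((-t) ^ k / (k.factorial : ℝ)) * Δ k i j) ^ 2 := by
    intro j
    rw [hBs, hBt]
    refine (sq_ite_sub_ite_le σ.injective Ψbar Ψs Ψt i j).trans_eq ?_
    simp only [hΨs, hΨt, sum_smul_apply_sub_sum_smul_apply, hΔ]
  calc ∑ j, (Bs i j - Bt (σ i) (σ j)) ^ 2
      ≤ ∑ j, (∑ k ∈ Icc 1 K, ((-t) ^ k / (k.factorial : ℝ)) * Δ k i j) ^ 2 :=
        sum_le_sum fun j _ => hentry j
    _ ≤ #(Icc 1 K) * ∑ k ∈ Icc 1 K, ((-t) ^ k / (k.factorial : ℝ)) ^ 2 * ∑ j, Δ k i j ^ 2 :=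
        sum_sq_sum_mul_le _ _ _ _
    _ ≤ K * ∑ k ∈ Icc 1 K, (t ^ k / (k.factorial : ℝ)) ^ 2 * ε k := by
        rw [Nat.card_Icc, Nat.add_sub_cancel]
        simp only [sq_neg_pow_div]
        gcongr with k hk
        exact hbound k hk

/-- Theorem 1 of the paper: per-node bound on the topology violation of the true matching.
`Ψˢ, Ψᵗ` are the truncated K-th order heat diffusion wavelets, `Bˢ, Bᵗ` the node
dissimilarity matrices, `Δ k` the k-th order perturbation, and the conclusion bounds the
topology violation of the pair `(i, σ i)`. -/
theorem sigma_theorem1_per_node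
    (n K : ℕ) (hn : 1 ≤ n) (hK : 1 ≤ K)
    (σ : Equiv.Perm (Fin n)) (Ls Lt : Matrix (Fin n) (Fin n) ℝ) (t Ψbar : ℝ)
    (Ψs Ψt : Matrix (Fin n) (Fin n) ℝ)
    (hΨs : Ψs = ∑ k ∈ Finset.Icc 1 K, ((-t) ^ k / (Nat.factorial k : ℝ)) • Ls ^ k)
    (hΨt : Ψt = ∑ k ∈ Finset.Icc 1 K, ((-t) ^ k / (Nat.factorial k : ℝ)) • Lt ^ k)
    (Bs Bt : Matrix (Fin n) (Fin n) ℝ)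
    (hBs : ∀ i j : Fin n, Bs i j = if i = j then 0 else Ψbar - Ψs i j)
    (hBt : ∀ i j : Fin n, Bt i j = if i = j then 0 else Ψbar - Ψt i j)
    (Δ : ℕ → Matrix (Fin n) (Fin n) ℝ)
    (hΔ : ∀ (k : ℕ) (i j : Fin n), Δ k i j = (Ls ^ k) i j - (Lt ^ k) (σ i) (σ j))
    (i : Fin n) (ε : ℕ → ℝ) (hε : ∀ k ∈ Finset.Icc 1 K, 0 ≤ ε k)
    (hbound : ∀ k ∈ Finset.Icc 1 K, ∑ j : Fin n, (Δ k i j) ^ 2 ≤ ε k) :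
    ∑ j : Fin n, (Bs i j - Bt (σ i) (σ j)) ^ 2 ≤
      (K : ℝ) * ∑ k ∈ Finset.Icc 1 K, (t ^ k / (Nat.factorial k : ℝ)) ^ 2 * ε k :=
  sigma_theorem1_per_node_general n K σ Ls Lt t Ψbar Ψs Ψt hΨs hΨt Bs Bt hBs hBt Δ hΔ i ε hbound
end

section
/- Let Gˢ and Gᵗ be simple graphs on the vertex set Fin n, and let π : Fin n ≃ Fin n be a bijection. For a vertex i, let Ñ(i) = {π(j) : j adjacent to i in Gˢ} be the π-image of the one-hop neighborhood of i in Gˢ, and let N(π(i)) be the one-hop neighborhood of π(i) in Gᵗ. Let Aˢ and Aᵗ denote the 0/1 adjacency matrices of Gˢ and Gᵗ (as real matrices). If Ñ(i) ∩ N(π(i)) is nonempty, then exp(−∑_{j=1}^{n} (Aˢ_{ij} − Aᵗ_{π(i)π(j)})²) ≤ |Ñ(i) ∩ N(π(i))| / |Ñ(i) ∪ N(π(i))|. -/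
open Finset in
/-- Inequality part of Proposition 1 of the paper: with one-hop neighborhood information
and t = 1, the exponentiated negative topology violation lower-bounds the Matched
Neighborhood Consistency, provided the intersection of neighborhoods is nonempty. -/
theorem sigma_prop1_inequality
    (n : ℕ) (Gs Gt : SimpleGraph (Fin n))
    [DecidableRel Gs.Adj] [DecidableRel Gt.Adj]
    (π : Equiv.Perm (Fin n)) (i : Fin n)
    (Ntil N : Finset (Fin n))
    (hNtil : Ntil = (Gs.neighborFinset i).image π)
    (hN : N = Gt.neighborFinset (π i))
    (As At : Matrix (Fin n) (Fin n) ℝ)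
    (hAs : As = Gs.adjMatrix ℝ) (hAt : At = Gt.adjMatrix ℝ)
    (hne : (Ntil ∩ N).Nonempty) :
    Real.exp (-∑ j : Fin n, (As i j - At (π i) (π j)) ^ 2) ≤
      ((Ntil ∩ N).card : ℝ) / ((Ntil ∪ N).card : ℝ) := by
  have hsum : ∑ j : Fin n, (As i j - At (π i) (π j)) ^ 2
      = ((Ntil ∪ N).card : ℝ) - ((Ntil ∩ N).card : ℝ) := by
    have hterm : ∀ j : Fin n, (As i j - At (π i) (π j)) ^ 2
        = ((if π j ∈ Ntil then (1:ℝ) else 0) - (if π j ∈ N then (1:ℝ) else 0)) ^ 2 := by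
      intro j
      have h1 : (π j ∈ Ntil) ↔ Gs.Adj i j := by
        subst hNtil
        simp [Finset.mem_image, SimpleGraph.mem_neighborFinset, π.injective.eq_iff]
      have h2 : (π j ∈ N) ↔ Gt.Adj (π i) (π j) := by
        subst hN; simp [SimpleGraph.mem_neighborFinset]
      subst hAs hAt
      simp only [SimpleGraph.adjMatrix_apply, h1, h2]
    calc ∑ j : Fin n, (As i j - At (π i) (π j)) ^ 2
        = ∑ j : Fin n, ((if π j ∈ Ntil then (1:ℝ) else 0)
            - (if π j ∈ N then (1:ℝ) else 0)) ^ 2 := by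
          exact Finset.sum_congr rfl fun j _ => hterm j
      _ = ∑ j : Fin n, ((if j ∈ Ntil then (1:ℝ) else 0)
            - (if j ∈ N then (1:ℝ) else 0)) ^ 2 :=
          Equiv.sum_comp π (fun j => ((if j ∈ Ntil then (1:ℝ) else 0)
            - (if j ∈ N then (1:ℝ) else 0)) ^ 2)
      _ = ∑ j : Fin n, ((if j ∈ Ntil ∪ N then (1:ℝ) else 0)
            - (if j ∈ Ntil ∩ N then (1:ℝ) else 0)) := by
          refine Finset.sum_congr rfl fun j _ => ?_
          by_cases h1 : j ∈ Ntil <;> by_cases h2 : j ∈ N <;>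
            simp [Finset.mem_union, Finset.mem_inter, h1, h2]
      _ = ((Ntil ∪ N).card : ℝ) - ((Ntil ∩ N).card : ℝ) := by
          rw [Finset.sum_sub_distrib]
          simp only [Finset.sum_boole, Finset.filter_mem_eq_inter, Finset.univ_inter]
  rw [hsum]
  set a := ((Ntil ∩ N).card : ℝ) with ha
  set u := ((Ntil ∪ N).card : ℝ) with hu
  have ha1 : (1:ℝ) ≤ a := by
    rw [ha]; exact_mod_cast hne.card_pos
  have hau : a ≤ u := by
    rw [ha, hu]
    exact_mod_cast Finset.card_le_card (Finset.inter_subset_union (s := Ntil) (t := N))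
  have hupos : (0:ℝ) < u := lt_of_lt_of_le one_pos (le_trans ha1 hau)
  rw [le_div_iff₀ hupos]
  have hE : (u - a) + 1 ≤ Real.exp (u - a) := Real.add_one_le_exp _
  have hEF : Real.exp (-(u - a)) * Real.exp (u - a) = 1 := by
    rw [← Real.exp_add]; simp
  have hFpos : 0 < Real.exp (-(u - a)) := Real.exp_pos _
  nlinarith [mul_le_mul_of_nonneg_left hE (le_trans zero_le_one ha1),
    mul_le_mul_of_nonneg_left
      (mul_le_mul_of_nonneg_left hE (le_trans zero_le_one ha1)) hFpos.le]
end

section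
/- Let n ≥ 1, let w : Fin n → ℝ be nonnegative with ∑_j w_j = 1, let ĵ ∈ Fin n with w_{ĵ} > 0, let c : Fin n → ℝ, let η > 0, and let α, β be reals such that: (1) c_{ĵ} ≤ α; (2) c_j ≥ β for all j ≠ ĵ; (3) n · exp(α·η) ≤ exp(β·η). Define Z = ∑_k w_k · exp(−η·c_k) and the multiplicatively updated weights w'_j = w_j · exp(−η·c_j) / Z. Then w'_{ĵ} ≥ w_{ĵ}. -/
/-- Row-wise core of Theorem 2 of the paper: under the three assumptions of the theorem,
the mirror-descent multiplicative update does not decrease the normalized mass on the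
current argmax entry `jhat`. -/
theorem sigma_theorem2_row
    (n : ℕ) (hn : 1 ≤ n) (w : Fin n → ℝ) (hw : ∀ j, 0 ≤ w j)
    (hsum : ∑ j : Fin n, w j = 1)
    (jhat : Fin n) (hjhat : 0 < w jhat)
    (c : Fin n → ℝ) (η : ℝ) (hη : 0 < η) (α β : ℝ)
    (h1 : c jhat ≤ α)
    (h2 : ∀ j : Fin n, j ≠ jhat → β ≤ c j)
    (h3 : (n : ℝ) * Real.exp (α * η) ≤ Real.exp (β * η))
    (Z : ℝ) (hZ : Z = ∑ k : Fin n, w k * Real.exp (-η * c k))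
    (w' : Fin n → ℝ) (hw' : ∀ j, w' j = w j * Real.exp (-η * c j) / Z) :
    w jhat ≤ w' jhat := by
  set E := Real.exp (-η * c jhat) with hE
  have hαβ : α ≤ β := by
    have h1n : (1 : ℝ) ≤ (n : ℝ) := by exact_mod_cast hn
    have : Real.exp (α * η) ≤ Real.exp (β * η) := by
      nlinarith [Real.exp_pos (α * η)]
    have := Real.exp_le_exp.mp this
    nlinarith
  have hterm : ∀ k : Fin n, w k * Real.exp (-η * c k) ≤ w k * E := by
    intro k
    by_cases hk : k = jhat
    · subst hk; exact le_rfl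
    · have hb : β ≤ c k := h2 k hk
      have : Real.exp (-η * c k) ≤ E := by
        rw [hE]; apply Real.exp_le_exp.mpr; nlinarith
      exact mul_le_mul_of_nonneg_left this (hw k)
  have hZle : Z ≤ E := by
    rw [hZ]
    calc ∑ k : Fin n, w k * Real.exp (-η * c k) ≤ ∑ k : Fin n, w k * E :=
          Finset.sum_le_sum fun k _ => hterm k
      _ = E := by rw [← Finset.sum_mul, hsum, one_mul]
  have hZpos : 0 < Z := by
    rw [hZ]
    have : 0 < w jhat * Real.exp (-η * c jhat) :=
      mul_pos hjhat (Real.exp_pos _)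
    refine lt_of_lt_of_le this ?_
    exact Finset.single_le_sum (f := fun k => w k * Real.exp (-η * c k)) (fun k _ => mul_nonneg (hw k) (Real.exp_pos _).le)
      (Finset.mem_univ jhat)
  rw [hw' jhat, le_div_iff₀ hZpos]
  calc w jhat * Z ≤ w jhat * E := mul_le_mul_of_nonneg_left hZle hjhat.le
    _ = w jhat * Real.exp (-η * c jhat) := rfl
end

section
/- Let n ≥ 1, let w : Fin n → ℝ be nonnegative with ∑_j w_j = 1, let ĵ ∈ Fin n with w_{ĵ} > 0 and w_{ĵ} ≥ w_j for all j (ĵ is an argmax of w), let c : Fin n → ℝ, let η > 0, and let α, β be reals such that: (1) c_{ĵ} ≤ α; (2) c_j ≥ β for all j ≠ ĵ; (3) n · exp(α·η) ≤ exp(β·η). Define Z = ∑_k w_k · exp(−η·c_k) and w'_j = w_j · exp(−η·c_j) / Z. Then for every j ≠ ĵ one has w'_{ĵ} ≥ n · w'_j, and consequently w'_{ĵ} ≥ n / (2n − 1); in particular ĵ remains an argmax of w'. -/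
/-- Strengthened row-wise lemma underlying Theorem 2 of the paper: the argmax entry `jhat`
dominates every other updated entry by a factor `n`, receives at least `n / (2n - 1)` of
the mass, and remains an argmax after the update. -/
theorem sigma_theorem2_row_strong
    (n : ℕ) (hn : 1 ≤ n) (w : Fin n → ℝ) (hw : ∀ j, 0 ≤ w j)
    (hsum : ∑ j : Fin n, w j = 1)
    (jhat : Fin n) (hjhat : 0 < w jhat) (hargmax : ∀ j : Fin n, w j ≤ w jhat)
    (c : Fin n → ℝ) (η : ℝ) (hη : 0 < η) (α β : ℝ)
    (h1 : c jhat ≤ α)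
    (h2 : ∀ j : Fin n, j ≠ jhat → β ≤ c j)
    (h3 : (n : ℝ) * Real.exp (α * η) ≤ Real.exp (β * η))
    (Z : ℝ) (hZ : Z = ∑ k : Fin n, w k * Real.exp (-η * c k))
    (w' : Fin n → ℝ) (hw' : ∀ j, w' j = w j * Real.exp (-η * c j) / Z) :
    (∀ j : Fin n, j ≠ jhat → (n : ℝ) * w' j ≤ w' jhat) ∧
      (n : ℝ) / (2 * n - 1) ≤ w' jhat ∧
      (∀ j : Fin n, w' j ≤ w' jhat) := by
  have hnpos : (0 : ℝ) < n := by exact_mod_cast hn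
  have hterm : ∀ k : Fin n, 0 ≤ w k * Real.exp (-η * c k) := fun k =>
    mul_nonneg (hw k) (Real.exp_pos _).le
  have hZpos : 0 < Z := by
    rw [hZ]
    have := Finset.single_le_sum (f := fun k : Fin n => w k * Real.exp (-η * c k))
      (fun k _ => hterm k) (Finset.mem_univ jhat)
    exact lt_of_lt_of_le (mul_pos hjhat (Real.exp_pos _)) this
  have hw'nn : ∀ j, 0 ≤ w' j := fun j => by
    rw [hw' j]; exact div_nonneg (hterm j) hZpos.le
  have h4 : (n : ℝ) * Real.exp (-η * β) ≤ Real.exp (-η * α) := by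
    have h := mul_le_mul_of_nonneg_right h3 (Real.exp_pos (-η * α - η * β)).le
    rw [mul_assoc, ← Real.exp_add, ← Real.exp_add] at h
    have e1 : α * η + (-η * α - η * β) = -η * β := by ring
    have e2 : β * η + (-η * α - η * β) = -η * α := by ring
    rwa [e1, e2] at h
  have hexp : ∀ j : Fin n, j ≠ jhat →
      (n : ℝ) * Real.exp (-η * c j) ≤ Real.exp (-η * c jhat) := by
    intro j hj
    have e1 : Real.exp (-η * c j) ≤ Real.exp (-η * β) :=
      Real.exp_le_exp.mpr (by nlinarith [h2 j hj])
    have e2 : Real.exp (-η * α) ≤ Real.exp (-η * c jhat) :=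
      Real.exp_le_exp.mpr (by nlinarith)
    calc (n : ℝ) * Real.exp (-η * c j) ≤ (n : ℝ) * Real.exp (-η * β) := by
          gcongr
      _ ≤ Real.exp (-η * α) := h4
      _ ≤ Real.exp (-η * c jhat) := e2
  have key : ∀ j : Fin n, j ≠ jhat → (n : ℝ) * w' j ≤ w' jhat := by
    intro j hj
    rw [hw' j, hw' jhat, ← mul_div_assoc]
    have hnum : (n : ℝ) * (w j * Real.exp (-η * c j)) ≤ w jhat * Real.exp (-η * c jhat) := by
      calc (n : ℝ) * (w j * Real.exp (-η * c j))
          = w j * ((n : ℝ) * Real.exp (-η * c j)) := by ring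
        _ ≤ w jhat * Real.exp (-η * c jhat) :=
            mul_le_mul (hargmax j) (hexp j hj) (by positivity) hjhat.le
    exact div_le_div_of_nonneg_right hnum hZpos.le |>.trans_eq rfl
  have hsum' : ∑ j : Fin n, w' j = 1 := by
    simp only [hw']
    rw [← Finset.sum_div, ← hZ, div_self hZpos.ne']
  have herase : ∑ j ∈ Finset.univ.erase jhat, w' j = 1 - w' jhat := by
    rw [Finset.sum_erase_eq_sub (Finset.mem_univ _), hsum']
  have hs : 1 - w' jhat ≤ ((n : ℝ) - 1) * (w' jhat / n) := by
    rw [← herase]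
    have hb : ∑ j ∈ Finset.univ.erase jhat, w' j
        ≤ ∑ _j ∈ Finset.univ.erase jhat, w' jhat / n :=
      Finset.sum_le_sum fun j hj =>
        (le_div_iff₀ hnpos).2 (by rw [mul_comm]; exact key j (Finset.ne_of_mem_erase hj))
    rw [Finset.sum_const, Finset.card_erase_of_mem (Finset.mem_univ _), Finset.card_univ,
      Fintype.card_fin, nsmul_eq_mul, Nat.cast_sub hn, Nat.cast_one] at hb
    exact hb
  have hn1 : (1 : ℝ) ≤ n := by exact_mod_cast hn
  have hs' : (n : ℝ) - (n : ℝ) * w' jhat ≤ ((n : ℝ) - 1) * w' jhat := by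
    have h := mul_le_mul_of_nonneg_right hs hnpos.le
    have e : ((n : ℝ) - 1) * (w' jhat / n) * n = ((n : ℝ) - 1) * w' jhat := by
      field_simp
    rw [e] at h
    nlinarith [h]
  have hmass : (n : ℝ) / (2 * n - 1) ≤ w' jhat := by
    rw [div_le_iff₀ (by linarith)]
    nlinarith [hs']
  refine ⟨key, hmass, fun j => ?_⟩
  by_cases hj : j = jhat
  · rw [hj]
  · nlinarith [key j hj, hw'nn j, hn1]
end
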